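/- arXiv:2402.02179 — 2 statements merged into one kernel-verified Lean document; each statement's English description precedes it below -/
import Mathlib

section
/- Let Φ be an anisotropy on ℝⁿ, η⁺ ∈ ∂Φ(eₙ), 0 ≤ β < Φ(eₙ), and let Ψ_β(x) = Φ(x) − β⟨x, η⁺/Φ(eₙ)⟩ (an anisotropy). Then for any x ∈ ℝⁿ: Ψ_β°(x) = 1 if and only if Φ°(x + β·η⁺/Φ(eₙ)) = 1, where Ψ_β° and Φ° are the respective dual anisotropies. -/
/-!
A sup over the compact level set `{Φ = 1}` is attained, so by homogeneity `Φ°(x) = 1` says exactly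
that `⟪x, ·⟫ ≤ Φ` with equality at some `y ≠ 0`; this needs only continuity, homogeneity and
coercivity, not convexity. Writing `a = β / Φ(eₙ)`, we have `Ψ_β = Φ - a ⟪η⁺, ·⟫`, so
`⟪x, y⟫ ≤ Ψ_β(y)` is the same inequality as `⟪x + a η⁺, y⟫ ≤ Φ(y)`, with equality at the same `y`.
`Ψ_β` is coercive because `Φ°(η⁺) = 1` gives `⟪η⁺, ·⟫ ≤ Φ` and `0 ≤ a < 1`.
-/


open MeasureTheory Set
open scoped RealInnerProductSpace ENNReal NNReal Pointwise

noncomputable section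

/-- A positively one-homogeneous function. -/
def PosHomOne {n : ℕ} (f : EuclideanSpace ℝ (Fin (n+1)) → ℝ) : Prop :=
  ∀ (t : ℝ), 0 ≤ t → ∀ x, f (t • x) = t * f x

/-- An anisotropy on ℝ^{n+1}: convex, positively one-homogeneous and comparable
to the Euclidean norm with constants `0 < c ≤ C`. -/
def IsAnisotropy {n : ℕ} (Φ : EuclideanSpace ℝ (Fin (n+1)) → ℝ) (c C : ℝ) : Prop :=
  0 < c ∧ c ≤ C ∧ ConvexOn ℝ Set.univ Φ ∧ PosHomOne Φ ∧
    ∀ x, c * ‖x‖ ≤ Φ x ∧ Φ x ≤ C * ‖x‖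

/-- The dual anisotropy Φ°(x) = sup {⟨x,y⟩ : Φ(y) = 1}. -/
def dualAniso {n : ℕ} (Φ : EuclideanSpace ℝ (Fin (n+1)) → ℝ)
    (x : EuclideanSpace ℝ (Fin (n+1))) : ℝ :=
  sSup {r : ℝ | ∃ y, Φ y = 1 ∧ r = ⟪x, y⟫}

/-- The last coordinate vector e_n = (0,…,0,1). -/
def eLast (n : ℕ) : EuclideanSpace ℝ (Fin (n+1)) := EuclideanSpace.single (Fin.last n) 1

/-- Subdifferential of a convex function. -/
def subdiff {n : ℕ} (f : EuclideanSpace ℝ (Fin (n+1)) → ℝ)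
    (θ : EuclideanSpace ℝ (Fin (n+1))) : Set (EuclideanSpace ℝ (Fin (n+1))) :=
  {ζ | ∀ y, f θ + ⟪ζ, y - θ⟫ ≤ f y}

/-- The open upper half-space Ω = {x_n > 0}. -/
def upperHalf (n : ℕ) : Set (EuclideanSpace ℝ (Fin (n+1))) := {x | 0 < x (Fin.last n)}

/-- The hyperplane ∂Ω = {x_n = 0}. -/
def halfBoundary (n : ℕ) : Set (EuclideanSpace ℝ (Fin (n+1))) := {x | x (Fin.last n) = 0}

/-- Divergence of a vector field. -/
def vdiv {n : ℕ} (T : EuclideanSpace ℝ (Fin (n+1)) → EuclideanSpace ℝ (Fin (n+1)))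
    (x : EuclideanSpace ℝ (Fin (n+1))) : ℝ :=
  ∑ i, fderiv ℝ T x (EuclideanSpace.single i 1) i

/-- `RB` is the reduced boundary and `ν` the generalized outer unit normal of the
finite perimeter set `E`, expressed through the generalized Gauss–Green theorem. -/
structure IsReducedBoundary {n : ℕ} (E RB : Set (EuclideanSpace ℝ (Fin (n+1))))
    (ν : EuclideanSpace ℝ (Fin (n+1)) → EuclideanSpace ℝ (Fin (n+1))) : Prop where
  unit : ∀ x ∈ RB, ‖ν x‖ = 1
  finite : μH[(n : ℝ)] RB ≠ ⊤
  gaussGreen : ∀ T : EuclideanSpace ℝ (Fin (n+1)) → EuclideanSpace ℝ (Fin (n+1)),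
    ContDiff ℝ 1 T → HasCompactSupport T →
    ∫ x in E, vdiv T x = ∫ x in RB, ⟪T x, ν x⟫ ∂μH[(n : ℝ)]

/-- Anisotropic relative perimeter P_Φ(E, U) = ∫_{U ∩ ∂*E} Φ(ν_E) dH^{n-1}. -/
def anisoPerimeter {n : ℕ} (Φ : EuclideanSpace ℝ (Fin (n+1)) → ℝ)
    (U RB : Set (EuclideanSpace ℝ (Fin (n+1))))
    (ν : EuclideanSpace ℝ (Fin (n+1)) → EuclideanSpace ℝ (Fin (n+1))) : ℝ :=
  ∫ x in U ∩ RB, Φ (ν x) ∂μH[(n : ℝ)]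

/-- The capillary functional 𝒞_{Φ,β}(E) = P_Φ(E,Ω) − β ℋ^{n-1}(∂Ω ∩ ∂*E). -/
def capillary {n : ℕ} (Φ : EuclideanSpace ℝ (Fin (n+1)) → ℝ) (β : ℝ)
    (RB : Set (EuclideanSpace ℝ (Fin (n+1))))
    (ν : EuclideanSpace ℝ (Fin (n+1)) → EuclideanSpace ℝ (Fin (n+1))) : ℝ :=
  anisoPerimeter Φ (upperHalf n) RB ν - β * (μH[(n : ℝ)] (halfBoundary n ∩ RB)).toReal

section

open Metric

variable {n : ℕ}

structure IsCoerciveGauge (f : EuclideanSpace ℝ (Fin (n+1)) → ℝ) (c : ℝ) : Prop where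
  pos : 0 < c
  continuous : Continuous f
  homogeneous : PosHomOne f
  coercive : ∀ y, c * ‖y‖ ≤ f y

lemma PosHomOne.map_zero {f : EuclideanSpace ℝ (Fin (n+1)) → ℝ} (hf : PosHomOne f) : f 0 = 0 := by
  simpa using hf 0 le_rfl 0

lemma IsAnisotropy.isCoerciveGauge {Φ : EuclideanSpace ℝ (Fin (n+1)) → ℝ} {c C : ℝ}
    (hΦ : IsAnisotropy Φ c C) : IsCoerciveGauge Φ c where
  pos := hΦ.1
  continuous := continuousOn_univ.mp (hΦ.2.2.1.continuousOn isOpen_univ)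
  homogeneous := hΦ.2.2.2.1
  coercive y := (hΦ.2.2.2.2 y).1

namespace IsCoerciveGauge

variable {f : EuclideanSpace ℝ (Fin (n+1)) → ℝ} {c : ℝ}

lemma pos_of_ne_zero (hf : IsCoerciveGauge f c) {y : EuclideanSpace ℝ (Fin (n+1))} (hy : y ≠ 0) :
    0 < f y :=
  (mul_pos hf.pos (norm_pos_iff.mpr hy)).trans_le (hf.coercive y)

lemma map_inv_smul_self (hf : IsCoerciveGauge f c) {y : EuclideanSpace ℝ (Fin (n+1))}
    (hy : y ≠ 0) : f ((f y)⁻¹ • y) = 1 := by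
  have hfy := hf.pos_of_ne_zero hy
  rw [hf.homogeneous _ (inv_nonneg.mpr hfy.le), inv_mul_cancel₀ hfy.ne']

lemma isCompact_level_one (hf : IsCoerciveGauge f c) : IsCompact {y | f y = 1} := by
  refine isCompact_of_isClosed_isBounded (isClosed_eq hf.continuous continuous_const) ?_
  refine (isBounded_iff_subset_closedBall 0).mpr ⟨c⁻¹, fun y (hy : f y = 1) => ?_⟩
  rw [mem_closedBall_zero_iff, ← one_div, le_div_iff₀' hf.pos, ← hy]
  exact hf.coercive y

lemma nonempty_level_one (hf : IsCoerciveGauge f c) : {y | f y = 1}.Nonempty := by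
  obtain ⟨y, hy⟩ := exists_ne (0 : EuclideanSpace ℝ (Fin (n+1)))
  exact ⟨_, hf.map_inv_smul_self hy⟩

lemma inner_le_of_level_one (hf : IsCoerciveGauge f c) {x : EuclideanSpace ℝ (Fin (n+1))}
    (h : ∀ y, f y = 1 → ⟪x, y⟫ ≤ 1) (y : EuclideanSpace ℝ (Fin (n+1))) : ⟪x, y⟫ ≤ f y := by
  rcases eq_or_ne y 0 with rfl | hy
  · simp [hf.homogeneous.map_zero]
  · have := h _ (hf.map_inv_smul_self hy)
    rwa [real_inner_smul_right, inv_mul_le_iff₀ (hf.pos_of_ne_zero hy), mul_one] at this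

theorem dualAniso_eq_one_iff (hf : IsCoerciveGauge f c) (x : EuclideanSpace ℝ (Fin (n+1))) :
    dualAniso f x = 1 ↔ (∀ y, ⟪x, y⟫ ≤ f y) ∧ ∃ y ≠ 0, ⟪x, y⟫ = f y := by
  set S := (⟪x, ·⟫) '' {y | f y = 1}
  have hS : {r : ℝ | ∃ y, f y = 1 ∧ r = ⟪x, y⟫} = S := by
    ext; simp [S, eq_comm]
  have hK : IsCompact S := hf.isCompact_level_one.image (by fun_prop)
  have hsup : sSup S = 1 ↔ IsGreatest S 1 :=
    ⟨fun h => h ▸ hK.isGreatest_sSup (hf.nonempty_level_one.image _), IsGreatest.csSup_eq⟩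
  rw [dualAniso, hS, hsup]
  simp only [S, IsGreatest, mem_upperBounds, mem_image, forall_exists_index, and_imp,
    forall_apply_eq_imp_iff₂]
  constructor
  · rintro ⟨⟨y, hy, hxy⟩, hle⟩
    refine ⟨hf.inner_le_of_level_one hle, y, ?_, hxy.trans hy.symm⟩
    rintro rfl
    simp [hf.homogeneous.map_zero] at hy
  · rintro ⟨hle, y, hy, hxy⟩
    refine ⟨⟨_, hf.map_inv_smul_self hy, ?_⟩, fun z hz => hz ▸ hle z⟩
    rw [real_inner_smul_right, hxy, inv_mul_cancel₀ (hf.pos_of_ne_zero hy).ne']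

lemma sub_mul_inner (hf : IsCoerciveGauge f c) {η : EuclideanSpace ℝ (Fin (n+1))}
    (hη : ∀ y, ⟪η, y⟫ ≤ f y) {a : ℝ} (ha₀ : 0 ≤ a) (ha₁ : a < 1) :
    IsCoerciveGauge (fun y => f y - a * ⟪η, y⟫) ((1 - a) * c) where
  pos := mul_pos (sub_pos.mpr ha₁) hf.pos
  continuous := hf.continuous.sub (by fun_prop)
  homogeneous t ht y := by
    simp only [hf.homogeneous t ht y, real_inner_smul_right]
    ring
  coercive y := by
    calc (1 - a) * c * ‖y‖ ≤ (1 - a) * f y := by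
          rw [mul_assoc]; exact mul_le_mul_of_nonneg_left (hf.coercive y) (by linarith)
      _ ≤ f y - a * ⟪η, y⟫ := by linarith [mul_le_mul_of_nonneg_left (hη y) ha₀]

end IsCoerciveGauge

end

theorem dual_unit_iff_general {n : ℕ} (Φ : EuclideanSpace ℝ (Fin (n+1)) → ℝ) (c C : ℝ)
    (hΦ : IsAnisotropy Φ c C) (η : EuclideanSpace ℝ (Fin (n+1)))
    (hη₂ : dualAniso Φ η = 1)
    (β : ℝ) (hβ₀ : 0 ≤ β) (hβ₁ : β < Φ (eLast n)) :
    ∀ x, dualAniso (fun y => Φ y - β * ⟪y, (Φ (eLast n))⁻¹ • η⟫) x = 1 ↔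
      dualAniso Φ (x + (β / Φ (eLast n)) • η) = 1 := by
  have hΦ' := hΦ.isCoerciveGauge
  have he : 0 < Φ (eLast n) := hΦ'.pos_of_ne_zero (by simp [eLast])
  set a := β / Φ (eLast n) with ha
  have hΨ : (fun y => Φ y - β * ⟪y, (Φ (eLast n))⁻¹ • η⟫) = fun y => Φ y - a * ⟪η, y⟫ := by
    funext y
    rw [real_inner_smul_right, real_inner_comm, ha, div_eq_mul_inv]
    ring
  have hη : ∀ y, ⟪η, y⟫ ≤ Φ y := ((hΦ'.dualAniso_eq_one_iff η).mp hη₂).1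
  have hΨ' := hΦ'.sub_mul_inner hη (div_nonneg hβ₀ he.le) ((div_lt_one he).mpr hβ₁)
  intro x
  rw [hΨ, hΨ'.dualAniso_eq_one_iff, hΦ'.dualAniso_eq_one_iff]
  have key : ∀ y, ⟪x + a • η, y⟫ - Φ y = ⟪x, y⟫ - (Φ y - a * ⟪η, y⟫) := fun y => by
    rw [inner_add_left, real_inner_smul_left]
    ring
  refine and_congr (forall_congr' fun y => ?_) (exists_congr fun y => and_congr_right fun _ => ?_)
  · rw [← sub_nonpos, ← key, sub_nonpos]
  · rw [← sub_eq_zero, ← key, sub_eq_zero]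

/-- Ψ_β°(x) = 1 ↔ Φ°(x + βη⁺/Φ(eₙ)) = 1. -/
theorem dual_unit_iff {n : ℕ} (Φ : EuclideanSpace ℝ (Fin (n+1)) → ℝ) (c C : ℝ)
    (hΦ : IsAnisotropy Φ c C) (η : EuclideanSpace ℝ (Fin (n+1)))
    (hη₁ : ⟪η, eLast n⟫ = Φ (eLast n)) (hη₂ : dualAniso Φ η = 1)
    (β : ℝ) (hβ₀ : 0 ≤ β) (hβ₁ : β < Φ (eLast n)) :
    ∀ x, dualAniso (fun y => Φ y - β * ⟪y, (Φ (eLast n))⁻¹ • η⟫) x = 1 ↔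
      dualAniso Φ (x + (β / Φ (eLast n)) • η) = 1 :=
  dual_unit_iff_general Φ c C hΦ η hη₂ β hβ₀ hβ₁
end
end

section
/- Let Φ be an anisotropy on ℝⁿ, η⁺ ∈ ∂Φ(eₙ), 0 ≤ β < Φ(eₙ), and Ψ_β(x) = Φ(x) − β⟨x, η⁺/Φ(eₙ)⟩. Then the Wulff shape of Ψ_β is the translated Wulff shape of Φ: W^{Ψ_β} := {x : Ψ_β°(x) ≤ 1} = −β·η⁺/Φ(eₙ) + {x : Φ°(x) ≤ 1}. -/
open MeasureTheory Set
open scoped RealInnerProductSpace ENNReal NNReal Pointwise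

noncomputable section

/-! By homogeneity, `F° x ≤ 1` iff `⟪x, ·⟫ ≤ F`. Writing `Ψ_β = Φ - ⟪v, ·⟫` with
`v = (β / Φ(eₙ)) η⁺`, the condition `⟪x, ·⟫ ≤ Ψ_β` reads `⟪x + v, ·⟫ ≤ Φ`, so `W^{Ψ_β} = -v + W^Φ`.
For this characterization to apply to `Ψ_β` it must be coercive: `Φ°(η⁺) ≤ 1` gives
`⟪η⁺, ·⟫ ≤ Φ`, hence `Ψ_β ≥ (1 - β / Φ(eₙ)) Φ`. -/

def wulffShape {n : ℕ} (F : EuclideanSpace ℝ (Fin (n+1)) → ℝ) :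
    Set (EuclideanSpace ℝ (Fin (n+1))) :=
  {x | dualAniso F x ≤ 1}

section Wulff

variable {n : ℕ} {F : EuclideanSpace ℝ (Fin (n+1)) → ℝ} {c : ℝ}

lemma PosHomOne.sub_inner (hF : PosHomOne F) (v : EuclideanSpace ℝ (Fin (n+1))) :
    PosHomOne (fun y => F y - ⟪v, y⟫) := by
  intro t ht y
  simp only [hF t ht y, real_inner_smul_right]
  ring

lemma bddAbove_inner_levelSet_one (hc : 0 < c) (hlow : ∀ y, c * ‖y‖ ≤ F y)
    (x : EuclideanSpace ℝ (Fin (n+1))) :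
    BddAbove {r : ℝ | ∃ y, F y = 1 ∧ r = ⟪x, y⟫} := by
  refine ⟨‖x‖ * c⁻¹, ?_⟩
  rintro r ⟨z, hz, rfl⟩
  have hz_norm : ‖z‖ ≤ c⁻¹ := by
    rw [← mul_one c⁻¹, le_inv_mul_iff₀ hc]
    exact hz ▸ hlow z
  calc ⟪x, z⟫ ≤ ‖x‖ * ‖z‖ := real_inner_le_norm x z
    _ ≤ ‖x‖ * c⁻¹ := by gcongr

lemma mem_wulffShape_iff (hc : 0 < c) (hF : PosHomOne F) (hlow : ∀ y, c * ‖y‖ ≤ F y)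
    (x : EuclideanSpace ℝ (Fin (n+1))) :
    x ∈ wulffShape F ↔ ∀ y, ⟪x, y⟫ ≤ F y := by
  refine ⟨fun hx y => ?_, fun h => Real.sSup_le ?_ zero_le_one⟩
  · rcases eq_or_ne y 0 with rfl | hy
    · simpa using hlow 0
    have hFy : 0 < F y := (mul_pos hc (norm_pos_iff.mpr hy)).trans_le (hlow y)
    have hmem : ⟪x, (F y)⁻¹ • y⟫ ∈ {r : ℝ | ∃ z, F z = 1 ∧ r = ⟪x, z⟫} :=
      ⟨(F y)⁻¹ • y, by rw [hF _ (by positivity) y, inv_mul_cancel₀ hFy.ne'], rfl⟩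
    have hle : (F y)⁻¹ * ⟪x, y⟫ ≤ 1 := by
      simpa [real_inner_smul_right] using
        (le_csSup (bddAbove_inner_levelSet_one hc hlow x) hmem).trans hx
    rwa [inv_mul_le_iff₀ hFy, mul_one] at hle
  · rintro r ⟨z, hz, rfl⟩
    exact hz ▸ h z

theorem wulffShape_sub_inner (hc : 0 < c) (hF : PosHomOne F) (hlow : ∀ y, c * ‖y‖ ≤ F y)
    {c' : ℝ} (hc' : 0 < c') (v : EuclideanSpace ℝ (Fin (n+1)))
    (hlow' : ∀ y, c' * ‖y‖ ≤ F y - ⟪v, y⟫) :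
    wulffShape (fun y => F y - ⟪v, y⟫) = -v +ᵥ wulffShape F := by
  ext x
  rw [Set.mem_vadd_set_iff_neg_vadd_mem, neg_neg, vadd_eq_add,
    mem_wulffShape_iff hc' (hF.sub_inner v) hlow', mem_wulffShape_iff hc hF hlow]
  refine forall_congr' fun y => ?_
  rw [inner_add_left]
  constructor <;> intro h <;> linarith

lemma le_sub_inner_smul_of_mem_wulffShape (hc : 0 < c) (hF : PosHomOne F)
    (hlow : ∀ y, c * ‖y‖ ≤ F y) {η : EuclideanSpace ℝ (Fin (n+1))} (hη : η ∈ wulffShape F)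
    {t : ℝ} (ht₀ : 0 ≤ t) (ht₁ : t ≤ 1) (y : EuclideanSpace ℝ (Fin (n+1))) :
    (c * (1 - t)) * ‖y‖ ≤ F y - ⟪t • η, y⟫ := by
  have hηy : ⟪η, y⟫ ≤ F y := (mem_wulffShape_iff hc hF hlow η).1 hη y
  calc (c * (1 - t)) * ‖y‖ = (1 - t) * (c * ‖y‖) := by ring
    _ ≤ (1 - t) * F y := mul_le_mul_of_nonneg_left (hlow y) (sub_nonneg.2 ht₁)
    _ = F y - t * F y := by ring
    _ ≤ F y - ⟪t • η, y⟫ := by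
      rw [real_inner_smul_left]
      exact sub_le_sub_left (mul_le_mul_of_nonneg_left hηy ht₀) _

end Wulff

lemma norm_eLast (n : ℕ) : ‖eLast n‖ = 1 := by
  simp [eLast]

theorem wulff_translate_general {n : ℕ} (Φ : EuclideanSpace ℝ (Fin (n+1)) → ℝ) (c C : ℝ)
    (hΦ : IsAnisotropy Φ c C) (η : EuclideanSpace ℝ (Fin (n+1)))
    (hη₂ : dualAniso Φ η = 1)
    (β : ℝ) (hβ₀ : 0 ≤ β) (hβ₁ : β < Φ (eLast n)) :
    {x | dualAniso (fun y => Φ y - β * ⟪y, (Φ (eLast n))⁻¹ • η⟫) x ≤ 1} =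
      (-((β / Φ (eLast n)) • η)) +ᵥ {x | dualAniso Φ x ≤ 1} := by
  obtain ⟨hc, -, -, hhom, hbnd⟩ := hΦ
  have hlow : ∀ y, c * ‖y‖ ≤ Φ y := fun y => (hbnd y).1
  have hΦe : 0 < Φ (eLast n) := hc.trans_le (by simpa [norm_eLast] using hlow (eLast n))
  set t := β / Φ (eLast n) with ht
  have ht₀ : 0 ≤ t := by positivity
  have ht₁ : t < 1 := (div_lt_one hΦe).2 hβ₁
  have hΨ : (fun y => Φ y - β * ⟪y, (Φ (eLast n))⁻¹ • η⟫) = fun y => Φ y - ⟪t • η, y⟫ := by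
    funext y
    rw [real_inner_smul_right, real_inner_smul_left, real_inner_comm, ht, div_eq_mul_inv]
    ring
  rw [hΨ]
  exact wulffShape_sub_inner hc hhom hlow (mul_pos hc (sub_pos.2 ht₁)) (t • η)
    (le_sub_inner_smul_of_mem_wulffShape hc hhom hlow hη₂.le ht₀ ht₁.le)

/-- the Wulff shape of Ψ_β is the translated Wulff shape of Φ. -/
theorem wulff_translate {n : ℕ} (Φ : EuclideanSpace ℝ (Fin (n+1)) → ℝ) (c C : ℝ)
    (hΦ : IsAnisotropy Φ c C) (η : EuclideanSpace ℝ (Fin (n+1)))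
    (hη₁ : ⟪η, eLast n⟫ = Φ (eLast n)) (hη₂ : dualAniso Φ η = 1)
    (β : ℝ) (hβ₀ : 0 ≤ β) (hβ₁ : β < Φ (eLast n)) :
    {x | dualAniso (fun y => Φ y - β * ⟪y, (Φ (eLast n))⁻¹ • η⟫) x ≤ 1} =
      (-((β / Φ (eLast n)) • η)) +ᵥ {x | dualAniso Φ x ≤ 1} :=
  wulff_translate_general Φ c C hΦ η hη₂ β hβ₀ hβ₁
end
end
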